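/- If P1, P2 ∈ SBrNDC and P1∖A_H ≈_b P2∖A_H, then P1/A_H ≈_b P2/A_H. -/

import Mathlib

namespace SecurityNI

/-- Process terms: `0`, action prefix (`none` = τ, `some a` = observable action),
choice, CSP-style parallel composition with synchronization set, restriction,
hiding, and constants (whose defining equations are given by an environment). -/
inductive Proc (A : Type) (C : Type) : Type where
  | nil : Proc A C
  | pre : Option A → Proc A C → Proc A C
  | choice : Proc A C → Proc A C → Proc A C
  | par : Set A → Proc A C → Proc A C → Proc A C
  | restrict : Proc A C → Set A → Proc A C
  | hide : Proc A C → Set A → Proc A C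
  | const : C → Proc A C

variable {A C : Type}

/-- A process term is guarded when every constant occurrence is in the scope
of an action prefix operator. -/
def Guarded : Proc A C → Prop
  | .nil => True
  | .pre _ _ => True
  | .choice p q => Guarded p ∧ Guarded q
  | .par _ p q => Guarded p ∧ Guarded q
  | .restrict p _ => Guarded p
  | .hide p _ => Guarded p
  | .const _ => False

/-- Operational semantics, parameterized by the defining equations `env` of
the constants.  Labels are `Option A`, with `none` playing the role of τ. -/
inductive Trans (env : C → Proc A C) : Proc A C → Option A → Proc A C → Prop where
  | pre (a : Option A) (p : Proc A C) : Trans env (.pre a p) a p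
  | choiceL {p q a p'} (h : Trans env p a p') : Trans env (.choice p q) a p'
  | choiceR {p q a q'} (h : Trans env q a q') : Trans env (.choice p q) a q'
  | parL {L p q a p'} (h : Trans env p a p') (hn : ∀ x, a = some x → x ∉ L) :
      Trans env (.par L p q) a (.par L p' q)
  | parR {L p q a q'} (h : Trans env q a q') (hn : ∀ x, a = some x → x ∉ L) :
      Trans env (.par L p q) a (.par L p q')
  | sync {L p q x p' q'} (h1 : Trans env p (some x) p') (h2 : Trans env q (some x) q')
      (hx : x ∈ L) : Trans env (.par L p q) (some x) (.par L p' q')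
  | res {p a p' L} (h : Trans env p a p') (hn : ∀ x, a = some x → x ∉ L) :
      Trans env (.restrict p L) a (.restrict p' L)
  | hideIn {p x p' L} (h : Trans env p (some x) p') (hx : x ∈ L) :
      Trans env (.hide p L) none (.hide p' L)
  | hideOut {p a p' L} (h : Trans env p a p') (hn : ∀ x, a = some x → x ∉ L) :
      Trans env (.hide p L) a (.hide p' L)
  | const {c a p'} (h : Trans env (env c) a p') : Trans env (.const c) a p'

section LTS

variable {S : Type} (tr : S → Option A → S → Prop)

/-- Finitely many (possibly zero) τ-transitions. -/
def TauStar : S → S → Prop :=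
  Relation.ReflTransGen (fun s s' => tr s none s')

/-- `B` is a branching bisimulation. -/
def IsBranchingBisim (B : S → S → Prop) : Prop :=
  Symmetric B ∧
    ∀ s1 s2, B s1 s2 → ∀ a s1', tr s1 a s1' →
      (a = none ∧ B s1' s2) ∨
      (∃ s2b s2', TauStar tr s2 s2b ∧ tr s2b a s2' ∧ B s1 s2b ∧ B s1' s2')

/-- Branching bisimilarity `≈_b`. -/
def BrBisim (s1 s2 : S) : Prop :=
  ∃ B, IsBranchingBisim tr B ∧ B s1 s2

/-- `B` is a weak bisimulation. -/
def IsWeakBisim (B : S → S → Prop) : Prop :=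
  Symmetric B ∧
    ∀ s1 s2, B s1 s2 →
      (∀ s1', tr s1 none s1' → ∃ s2', TauStar tr s2 s2' ∧ B s1' s2') ∧
      (∀ x s1', tr s1 (some x) s1' →
        ∃ t t' s2', TauStar tr s2 t ∧ tr t (some x) t' ∧ TauStar tr t' s2' ∧ B s1' s2')

/-- Weak bisimilarity `≈`. -/
def WeakBisim (s1 s2 : S) : Prop :=
  ∃ B, IsWeakBisim tr B ∧ B s1 s2

/-- Reachability via finitely many transitions. -/
def Reach : S → S → Prop :=
  Relation.ReflTransGen (fun s s' => ∃ a, tr s a s')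

end LTS

section Security

variable (env : C → Proc A C) (AH : Set A)

/-- `P ∈ BrSNNI` iff `P∖A_H ≈_b P/A_H`. -/
def BrSNNI (p : Proc A C) : Prop :=
  BrBisim (Trans env) (.restrict p AH) (.hide p AH)

/-- All processes reachable from `q` perform only actions in `AH`. -/
def HighOnly (q : Proc A C) : Prop :=
  ∀ q', Reach (Trans env) q q' → ∀ a q'', Trans env q' a q'' → ∃ h ∈ AH, a = some h

/-- `P ∈ BrNDC` iff `P∖A_H ≈_b ((P ∥_L Q)/L)∖A_H` for every high-level `Q`
and every `L ⊆ A_H`. -/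
def BrNDC (p : Proc A C) : Prop :=
  ∀ q, HighOnly env AH q → ∀ L, L ⊆ AH →
    BrBisim (Trans env) (.restrict p AH) (.restrict (.hide (.par L p q) L) AH)

/-- `P ∈ SBrSNNI` iff every reachable process is BrSNNI. -/
def SBrSNNI (p : Proc A C) : Prop :=
  ∀ p', Reach (Trans env) p p' → BrSNNI env AH p'

/-- `P ∈ P_BrNDC` iff every reachable process is BrNDC. -/
def PBrNDC (p : Proc A C) : Prop :=
  ∀ p', Reach (Trans env) p p' → BrNDC env AH p'

/-- `P ∈ SBrNDC` iff for every reachable `P'` and every high transition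
`P' --h→ P''`, `P'∖A_H ≈_b P''∖A_H`. -/
def SBrNDC (p : Proc A C) : Prop :=
  ∀ p' p'', Reach (Trans env) p p' → ∀ h ∈ AH, Trans env p' (some h) p'' →
    BrBisim (Trans env) (.restrict p' AH) (.restrict p'' AH)

/-- `P ∈ BSNNI` iff `P∖A_H ≈ P/A_H`. -/
def BSNNI (p : Proc A C) : Prop :=
  WeakBisim (Trans env) (.restrict p AH) (.hide p AH)

/-- `P ∈ BNDC` iff `P∖A_H ≈ ((P ∥_L Q)/L)∖A_H` for every high-level `Q`
and every `L ⊆ A_H`. -/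
def BNDC (p : Proc A C) : Prop :=
  ∀ q, HighOnly env AH q → ∀ L, L ⊆ AH →
    WeakBisim (Trans env) (.restrict p AH) (.restrict (.hide (.par L p q) L) AH)

/-- `P ∈ SBSNNI` iff every reachable process is BSNNI. -/
def SBSNNI (p : Proc A C) : Prop :=
  ∀ p', Reach (Trans env) p p' → BSNNI env AH p'

/-- `P ∈ P_BNDC` iff every reachable process is BNDC. -/
def PBNDC (p : Proc A C) : Prop :=
  ∀ p', Reach (Trans env) p p' → BNDC env AH p'

/-- `P ∈ SBNDC` iff for every reachable `P'` and every high transition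
`P' --h→ P''`, `P'∖A_H ≈ P''∖A_H`. -/
def SBNDC (p : Proc A C) : Prop :=
  ∀ p' p'', Reach (Trans env) p p' → ∀ h ∈ AH, Trans env p' (some h) p'' →
    WeakBisim (Trans env) (.restrict p' AH) (.restrict p'' AH)

/-- No high-level actions occur in `p`: no process reachable from `p`
can perform a high-level action. -/
def NoHigh (p : Proc A C) : Prop :=
  ∀ p', Reach (Trans env) p p' → ∀ h ∈ AH, ∀ p'', ¬ Trans env p' (some h) p''

end Security

/-! The hidden processes `p/A_H`, `q/A_H` with `p`, `q` reachable from `P1` or `P2` and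
`p∖A_H ≈_b q∖A_H` form a branching bisimulation. A low step of `p/A_H` is also a step of
`p∖A_H`, so it is matched by `q∖A_H` and hence by `q/A_H`. A high step `p --h→ p''` becomes a
τ-step of `p/A_H` which `q/A_H` answers by standing still: SBrNDC gives `p''∖A_H ≈_b p∖A_H`,
and `≈_b` is transitive. Transitivity is obtained through Basten's semi-branching
bisimulations, which (unlike branching bisimulations) are closed under composition and whose
largest one coincides with `≈_b`. -/

section SemiBranching

variable {S : Type} (tr : S → Option A → S → Prop)

def SemiBranchingTransfer (B : S → S → Prop) (s t : S) : Prop :=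
  ∀ a s', tr s a s' →
    ∃ tb, TauStar tr t tb ∧ B s tb ∧ ((a = none ∧ B s' tb) ∨ ∃ t', tr tb a t' ∧ B s' t')

def IsSemiBranchingBisim (B : S → S → Prop) : Prop :=
  Symmetric B ∧ ∀ s t, B s t → SemiBranchingTransfer tr B s t

def SemiBrBisim (s t : S) : Prop :=
  ∃ B, IsSemiBranchingBisim tr B ∧ B s t

variable {tr}

theorem SemiBranchingTransfer.mono {B B' : S → S → Prop} (hBB' : ∀ s t, B s t → B' s t)
    {s t : S} (h : SemiBranchingTransfer tr B s t) : SemiBranchingTransfer tr B' s t := by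
  intro a s' hs
  obtain ⟨tb, htb, hstb, hstep⟩ := h a s' hs
  refine ⟨tb, htb, hBB' _ _ hstb, ?_⟩
  rcases hstep with ⟨ha, h'⟩ | ⟨t', ht', h'⟩
  exacts [Or.inl ⟨ha, hBB' _ _ h'⟩, Or.inr ⟨t', ht', hBB' _ _ h'⟩]

theorem SemiBranchingTransfer.of_tauStar {B : S → S → Prop} {s t u : S}
    (h : SemiBranchingTransfer tr B s t) (hut : TauStar tr u t) :
    SemiBranchingTransfer tr B s u := by
  intro a s' hs
  obtain ⟨tb, htb, hrest⟩ := h a s' hs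
  exact ⟨tb, hut.trans htb, hrest⟩

theorem IsBranchingBisim.isSemiBranchingBisim {B : S → S → Prop} (hB : IsBranchingBisim tr B) :
    IsSemiBranchingBisim tr B := by
  refine ⟨hB.1, fun s t hst a s' hs => ?_⟩
  rcases hB.2 s t hst a s' hs with ⟨ha, h'⟩ | ⟨tb, t', htb, ht', hstb, h'⟩
  exacts [⟨t, .refl, hst, Or.inl ⟨ha, h'⟩⟩, ⟨tb, htb, hstb, Or.inr ⟨t', ht', h'⟩⟩]

theorem IsSemiBranchingBisim.semiBrBisim {B : S → S → Prop} (hB : IsSemiBranchingBisim tr B)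
    {s t : S} (h : B s t) : SemiBrBisim tr s t :=
  ⟨B, hB, h⟩

theorem SemiBrBisim.symm {s t : S} (h : SemiBrBisim tr s t) : SemiBrBisim tr t s := by
  obtain ⟨B, hB, hst⟩ := h
  exact hB.semiBrBisim (hB.1 hst)

theorem isSemiBranchingBisim_semiBrBisim : IsSemiBranchingBisim tr (SemiBrBisim tr) := by
  refine ⟨fun _ _ h => h.symm, fun s t ⟨B, hB, hst⟩ => ?_⟩
  exact (hB.2 s t hst).mono fun _ _ => hB.semiBrBisim

theorem SemiBrBisim.transfer {s t : S} (h : SemiBrBisim tr s t) :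
    SemiBranchingTransfer tr (SemiBrBisim tr) s t :=
  isSemiBranchingBisim_semiBrBisim.2 s t h

theorem IsSemiBranchingBisim.exists_tauStar {B : S → S → Prop} (hB : IsSemiBranchingBisim tr B)
    {s t s' : S} (h : B s t) (hs : TauStar tr s s') : ∃ t', TauStar tr t t' ∧ B s' t' := by
  induction hs with
  | refl => exact ⟨t, .refl, h⟩
  | tail _ hstep ih =>
    obtain ⟨t1, ht1, h1⟩ := ih
    obtain ⟨t2, ht2, -, ⟨-, h2⟩ | ⟨t3, ht3, h3⟩⟩ := hB.2 _ _ h1 none _ hstep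
    exacts [⟨t2, ht1.trans ht2, h2⟩, ⟨t3, (ht1.trans ht2).tail ht3, h3⟩]

/-- Basten's stuttering lemma. -/
theorem SemiBrBisim.of_tauStar_between {s t u v : S} (hst : SemiBrBisim tr s t)
    (hsv : SemiBrBisim tr s v) (htu : TauStar tr t u) (huv : TauStar tr u v) :
    SemiBrBisim tr s u := by
  let R₀ : S → S → Prop := fun x y => ∃ t v, SemiBrBisim tr x t ∧ SemiBrBisim tr x v ∧
    TauStar tr t y ∧ TauStar tr y v
  have hle : ∀ x y, SemiBrBisim tr x y → R₀ x y ∨ R₀ y x :=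
    fun x y h => Or.inl ⟨y, y, h, h, .refl, .refl⟩
  have hR₀ : ∀ x y, R₀ x y → SemiBranchingTransfer tr (SemiBrBisim tr) x y :=
    fun x y ⟨_, v, _, hxv, _, hyv⟩ => hxv.transfer.of_tauStar hyv
  have hR : IsSemiBranchingBisim tr fun x y => R₀ x y ∨ R₀ y x := by
    refine ⟨fun x y h => h.symm, fun x y h => ?_⟩
    rcases h with h | ⟨t, -, hyt, -, htx, -⟩
    · exact (hR₀ x y h).mono hle
    · obtain ⟨y₁, hyy₁, hxy₁⟩ := isSemiBranchingBisim_semiBrBisim.exists_tauStar hyt.symm htx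
      exact (hxy₁.transfer.of_tauStar hyy₁).mono hle
  exact hR.semiBrBisim (Or.inl ⟨t, v, hst, hsv, htu, huv⟩)

theorem isBranchingBisim_semiBrBisim : IsBranchingBisim tr (SemiBrBisim tr) := by
  refine ⟨fun _ _ h => h.symm, fun s t hst a s' hs => ?_⟩
  obtain ⟨tb, htb, hstb, ⟨rfl, h'⟩ | ⟨t', ht', h'⟩⟩ := hst.transfer a s' hs
  · cases htb with
    | refl => exact Or.inl ⟨rfl, h'⟩
    | tail htu hstep =>
      exact Or.inr ⟨_, tb, htu, hstep, hst.of_tauStar_between hstb htu (.single hstep), h'⟩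
  · exact Or.inr ⟨tb, t', htb, ht', hstb, h'⟩

theorem SemiBrBisim.trans {s t u : S} (hst : SemiBrBisim tr s t) (htu : SemiBrBisim tr t u) :
    SemiBrBisim tr s u := by
  let R : S → S → Prop := fun x z => ∃ y, SemiBrBisim tr x y ∧ SemiBrBisim tr y z
  have hR : IsSemiBranchingBisim tr R := by
    refine ⟨fun x z ⟨y, hxy, hyz⟩ => ⟨y, hyz.symm, hxy.symm⟩, fun x z ⟨y, hxy, hyz⟩ => ?_⟩
    intro a x' hx
    obtain ⟨yb, hyyb, hxyb, hstep⟩ := hxy.transfer a x' hx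
    obtain ⟨zh, hzzh, hybzh⟩ := isSemiBranchingBisim_semiBrBisim.exists_tauStar hyz hyyb
    rcases hstep with ⟨rfl, hx'yb⟩ | ⟨y', hyby', hx'y'⟩
    · exact ⟨zh, hzzh, ⟨yb, hxyb, hybzh⟩, Or.inl ⟨rfl, yb, hx'yb, hybzh⟩⟩
    · obtain ⟨zb, hzhzb, hybzb, hzstep⟩ := hybzh.transfer a y' hyby'
      refine ⟨zb, hzzh.trans hzhzb, ⟨yb, hxyb, hybzb⟩, ?_⟩
      rcases hzstep with ⟨rfl, hy'zb⟩ | ⟨z', hzbz', hy'z'⟩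
      exacts [Or.inl ⟨rfl, y', hx'y', hy'zb⟩, Or.inr ⟨z', hzbz', y', hx'y', hy'z'⟩]
  exact hR.semiBrBisim ⟨t, hst, htu⟩

theorem brBisim_iff_semiBrBisim {s t : S} : BrBisim tr s t ↔ SemiBrBisim tr s t :=
  ⟨fun ⟨_, hB, h⟩ => hB.isSemiBranchingBisim.semiBrBisim h,
    fun h => ⟨_, isBranchingBisim_semiBrBisim, h⟩⟩

theorem isBranchingBisim_brBisim : IsBranchingBisim tr (BrBisim tr) := by
  rw [show BrBisim tr = SemiBrBisim tr from funext₂ fun _ _ => propext brBisim_iff_semiBrBisim]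
  exact isBranchingBisim_semiBrBisim

theorem BrBisim.symm {s t : S} (h : BrBisim tr s t) : BrBisim tr t s :=
  isBranchingBisim_brBisim.1 h

theorem BrBisim.trans {s t u : S} (hst : BrBisim tr s t) (htu : BrBisim tr t u) :
    BrBisim tr s u := by
  rw [brBisim_iff_semiBrBisim] at *
  exact hst.trans htu

end SemiBranching

section Hiding

variable {env : C → Proc A C} {AH : Set A}

theorem tauStar_restrict_inv {p s : Proc A C} (h : TauStar (Trans env) (.restrict p AH) s) :
    ∃ p', s = .restrict p' AH ∧ TauStar (Trans env) p p' := by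
  induction h with
  | refl => exact ⟨p, rfl, .refl⟩
  | tail _ hstep ih =>
    obtain ⟨p₁, rfl, hp₁⟩ := ih
    cases hstep with
    | res hstep _ => exact ⟨_, rfl, hp₁.tail hstep⟩

theorem tauStar_hide {p q : Proc A C} (h : TauStar (Trans env) p q) :
    TauStar (Trans env) (.hide p AH) (.hide q AH) :=
  Relation.ReflTransGen.lift (p := fun s s' => Trans env s none s') (Proc.hide · AH)
    (fun _ _ hstep => Trans.hideOut hstep (by simp)) _ _ h

variable (env AH)

inductive HideRel (X : Set (Proc A C)) : Proc A C → Proc A C → Prop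
  | mk {p q : Proc A C} (hp : p ∈ X) (hq : q ∈ X)
      (h : BrBisim (Trans env) (.restrict p AH) (.restrict q AH)) :
      HideRel X (.hide p AH) (.hide q AH)

variable {env AH}

theorem isBranchingBisim_hideRel {X : Set (Proc A C)}
    (hX : ∀ p ∈ X, ∀ a p', Trans env p a p' → p' ∈ X)
    (hhigh : ∀ p ∈ X, ∀ h ∈ AH, ∀ p', Trans env p (some h) p' →
      BrBisim (Trans env) (.restrict p AH) (.restrict p' AH)) :
    IsBranchingBisim (Trans env) (HideRel env AH X) := by
  have hXτ : ∀ p ∈ X, ∀ p', TauStar (Trans env) p p' → p' ∈ X := fun p hp p' hpp' => by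
    induction hpp' with
    | refl => exact hp
    | tail _ hstep ih => exact hX _ ih _ _ hstep
  refine ⟨fun _ _ ⟨hp, hq, h⟩ => .mk hq hp h.symm, ?_⟩
  rintro _ _ ⟨hp, hq, hpq⟩ a _ hstep
  cases hstep with
  | hideIn hstep hh =>
    exact Or.inl ⟨rfl, .mk (hX _ hp _ _ hstep) hq ((hhigh _ hp _ hh _ hstep).symm.trans hpq)⟩
  | hideOut hstep hlow =>
    rcases isBranchingBisim_brBisim.2 _ _ hpq a _ (Trans.res hstep hlow) with
      ⟨rfl, h'⟩ | ⟨_, _, hτ, hqbstep, hpqb, h'⟩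
    · exact Or.inl ⟨rfl, .mk (hX _ hp _ _ hstep) hq h'⟩
    obtain ⟨qb, rfl, hqqb⟩ := tauStar_restrict_inv hτ
    have hqb := hXτ _ hq _ hqqb
    cases hqbstep with
    | res hqbstep hlow' =>
      exact Or.inr ⟨_, _, tauStar_hide hqqb, .hideOut hqbstep hlow', .mk hp hqb hpqb,
        .mk (hX _ hp _ _ hstep) (hX _ hqb _ _ hqbstep) h'⟩

end Hiding

theorem sbrndc_restrict_to_hide_general {A C : Type} (env : C → Proc A C)
    (AH : Set A) (P1 P2 : Proc A C)
    (h1 : SBrNDC env AH P1) (h2 : SBrNDC env AH P2)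
    (h : BrBisim (Trans env) (Proc.restrict P1 AH) (Proc.restrict P2 AH)) :
    BrBisim (Trans env) (Proc.hide P1 AH) (Proc.hide P2 AH) := by
  let X : Set (Proc A C) := {p | Reach (Trans env) P1 p ∨ Reach (Trans env) P2 p}
  have hX : ∀ p ∈ X, ∀ a p', Trans env p a p' → p' ∈ X := by
    rintro p (hp | hp) a p' hstep
    exacts [Or.inl (hp.tail ⟨a, hstep⟩), Or.inr (hp.tail ⟨a, hstep⟩)]
  have hhigh : ∀ p ∈ X, ∀ h ∈ AH, ∀ p', Trans env p (some h) p' →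
      BrBisim (Trans env) (.restrict p AH) (.restrict p' AH) := by
    rintro p (hp | hp) h hh p' hstep
    exacts [h1 p p' hp h hh hstep, h2 p p' hp h hh hstep]
  exact ⟨_, isBranchingBisim_hideRel hX hhigh, .mk (Or.inl .refl) (Or.inr .refl) h⟩

/-- Lemma 4.6(2). -/
theorem sbrndc_restrict_to_hide {A C : Type} (env : C → Proc A C)
    (hguard : ∀ c, Guarded (env c)) (AH : Set A) (P1 P2 : Proc A C)
    (h1 : SBrNDC env AH P1) (h2 : SBrNDC env AH P2)
    (h : BrBisim (Trans env) (Proc.restrict P1 AH) (Proc.restrict P2 AH)) :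
    BrBisim (Trans env) (Proc.hide P1 AH) (Proc.hide P2 AH) :=
  sbrndc_restrict_to_hide_general env AH P1 P2 h1 h2 h

end SecurityNI
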